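/- arXiv:2504.08105 — 3 statements merged into one kernel-verified Lean document; each statement's English description precedes it below -/
import Mathlib

section
/- Let 0 ≤ τ < σ ≤ ∞ and m ≥ 1, let X : ℝ⁴ → ℝ be a nonzero harmonic polynomial homogeneous of degree 1, and let f : (τ,σ) → ℝ^m be a six-times continuously differentiable function such that u(x) = f(|x|) X(x/|x|) satisfies Δ³u = 0 on the open annulus {x ∈ ℝ⁴ : τ < |x| < σ}. Then there exist vectors B₁, …, B₆ ∈ ℝ^m such that f(r) = B₁ r^{-3} + B₂ r^{-1} + B₃ r + B₄ r ln r + B₅ r³ + B₆ r⁵ for all r ∈ (τ,σ). -/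
noncomputable section

/-- The Euclidean Laplacian on `ℝ⁴`, `Δu = Σ_{i=1}^4 ∂²u/∂x_i²`, applied componentwise to
vector-valued functions. -/
def lap {V : Type*} [NormedAddCommGroup V] [NormedSpace ℝ V]
    (u : EuclideanSpace ℝ (Fin 4) → V) (x : EuclideanSpace ℝ (Fin 4)) : V :=
  ∑ i : Fin 4,
    fderiv ℝ (fun y => fderiv ℝ u y (EuclideanSpace.single i 1)) x (EuclideanSpace.single i 1)

/-- `P : ℝ⁴ → ℝ` is a harmonic polynomial homogeneous of degree `h`. -/
def IsHarmonicHomog (h : ℕ) (P : EuclideanSpace ℝ (Fin 4) → ℝ) : Prop :=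
  (∃ p : MvPolynomial (Fin 4) ℝ, p.IsHomogeneous h ∧
    ∀ x : EuclideanSpace ℝ (Fin 4), P x = MvPolynomial.eval (fun i => x i) p) ∧
  ∀ x, lap P x = 0

/-!
Write `X = ℓ` with `ℓ` linear and `u y = ℓ y • G (‖y‖²)` with `G s = s^(-1/2) • f (√s)`. On such
functions the Laplacian of `ℝ⁴` acts through the profile: `Δ u = ℓ y • (L G)(‖y‖²)` with
`L W = 12 W' + 4 s W''` (`radialLap`), so `Δ³ u = 0` forces `L³ G = 0`. Since
`(s² / 4) • L W = (s³ W')'`, the equation `L W = R` is solved by two integrations, and its kernel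
is spanned by `1` and `s⁻²`. Inverting `L` three times shows that `G` is a combination of
`1, s⁻², s, s⁻¹, s², log s`, and `f r = r • G (r²)` gives the six radial functions of the statement.
-/

open Set Filter Topology
open scoped RealInnerProductSpace

section

variable {V : Type*} [NormedAddCommGroup V] [NormedSpace ℝ V]

theorem Filter.EventuallyEq.lap_eq {u v : EuclideanSpace ℝ (Fin 4) → V}
    {x : EuclideanSpace ℝ (Fin 4)} (h : u =ᶠ[𝓝 x] v) : lap u x = lap v x := by
  unfold lap
  congr! 2 with i
  exact EventuallyEq.fderiv_eq (h.eventuallyEq_nhds.mono fun y hy => by simp only [hy.fderiv_eq])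

theorem HasFDerivAt.smul_comp_norm_sq {E : Type*} [NormedAddCommGroup E] [InnerProductSpace ℝ E]
    {g : E → ℝ} {g' : E →L[ℝ] ℝ} {Z : ℝ → V} {z : V} {x : E}
    (hg : HasFDerivAt g g' x) (hZ : HasDerivAt Z z (‖x‖ ^ 2)) :
    HasFDerivAt (fun y => g y • Z (‖y‖ ^ 2))
      (g'.smulRight (Z (‖x‖ ^ 2)) + (2 * g x) • (innerSL ℝ x).smulRight z) x := by
  have hZq := hZ.hasFDerivAt.comp x (hasStrictFDerivAt_norm_sq x).hasFDerivAt
  refine (hg.smul hZq).congr_fderiv ?_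
  ext v
  simp
  module

def radialLap (W : ℝ → V) (s : ℝ) : V := (12 : ℝ) • deriv W s + (4 * s) • deriv (deriv W) s

theorem fderiv_fderiv_smul_comp_norm_sq_apply {E : Type*} [NormedAddCommGroup E]
    [InnerProductSpace ℝ E] (ℓ : E →L[ℝ] ℝ) {W : ℝ → V} {S : Set ℝ} (hS : IsOpen S)
    (hW : ContDiffOn ℝ 2 W S) {x : E} (hx : ‖x‖ ^ 2 ∈ S) (v : E) :
    fderiv ℝ (fun y => fderiv ℝ (fun y => ℓ y • W (‖y‖ ^ 2)) y v) x v =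
      (4 * ℓ v * ⟪x, v⟫ + 2 * ℓ x * ‖v‖ ^ 2) • deriv W (‖x‖ ^ 2) +
        (4 * ℓ x * ⟪x, v⟫ ^ 2) • deriv (deriv W) (‖x‖ ^ 2) := by
  have hW' : ∀ s ∈ S, HasDerivAt W (deriv W s) s := fun s hs =>
    (hW.differentiableOn two_ne_zero).hasDerivAt (hS.mem_nhds hs)
  have hW'' : HasDerivAt (deriv W) (deriv (deriv W) (‖x‖ ^ 2)) (‖x‖ ^ 2) :=
    ((hW.deriv_of_isOpen (m := 1) hS (by norm_num)).differentiableOn one_ne_zero).hasDerivAt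
      (hS.mem_nhds hx)
  have hO : IsOpen {y : E | ‖y‖ ^ 2 ∈ S} := hS.preimage (by fun_prop)
  have hfirst : (fun y => fderiv ℝ (fun y => ℓ y • W (‖y‖ ^ 2)) y v) =ᶠ[𝓝 x]
      fun y => ℓ v • W (‖y‖ ^ 2) + (2 * ℓ y * ⟪y, v⟫) • deriv W (‖y‖ ^ 2) :=
    Filter.mem_of_superset (hO.mem_nhds hx) fun y (hy : ‖y‖ ^ 2 ∈ S) => by
      simp [(ℓ.hasFDerivAt.smul_comp_norm_sq (hW' _ hy)).fderiv, smul_smul, mul_assoc]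
  have hg : HasFDerivAt (fun y => 2 * ℓ y * ⟪y, v⟫) _ x :=
    (ℓ.hasFDerivAt.const_mul 2).mul ((hasFDerivAt_id x).inner ℝ (hasFDerivAt_const v x))
  rw [hfirst.fderiv_eq, (((hasFDerivAt_const (ℓ v) x).smul_comp_norm_sq (hW' _ hx)).fun_add
    (hg.smul_comp_norm_sq hW'')).fderiv]
  simp
  module

theorem lap_smul_comp_norm_sq (ℓ : EuclideanSpace ℝ (Fin 4) →L[ℝ] ℝ) {W : ℝ → V} {S : Set ℝ}
    (hS : IsOpen S) (hW : ContDiffOn ℝ 2 W S) {x : EuclideanSpace ℝ (Fin 4)}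
    (hx : ‖x‖ ^ 2 ∈ S) :
    lap (fun y => ℓ y • W (‖y‖ ^ 2)) x = ℓ x • radialLap W (‖x‖ ^ 2) := by
  have hℓ : ℓ x = ∑ i, x i * ℓ (EuclideanSpace.single i 1) := by
    conv_lhs => rw [← (EuclideanSpace.basisFun (Fin 4) ℝ).sum_repr x]
    simp
  unfold lap radialLap
  simp only [fderiv_fderiv_smul_comp_norm_sq_apply ℓ hS hW hx, EuclideanSpace.inner_single_right,
    Finset.sum_add_distrib, ← Finset.sum_smul, smul_add, smul_smul]
  congr 2
  · simp [hℓ, Fin.sum_univ_four]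
    ring
  · simp [EuclideanSpace.real_norm_sq_eq, Fin.sum_univ_four]
    ring

theorem ContDiffOn.radialLap {m n : WithTop ℕ∞} {W : ℝ → V} {S : Set ℝ}
    (hW : ContDiffOn ℝ n W S) (hS : IsOpen S) (hmn : m + 2 ≤ n) :
    ContDiffOn ℝ m (radialLap W) S := by
  have hW' : ContDiffOn ℝ (m + 1) (deriv W) S :=
    hW.deriv_of_isOpen hS (by rwa [add_assoc, one_add_one_eq_two])
  exact (contDiffOn_const.smul (hW'.of_le le_self_add)).add
    ((contDiffOn_const.mul contDiffOn_id).smul (hW'.deriv_of_isOpen hS le_rfl))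

theorem exists_eq_add_of_hasDerivAt {S : Set ℝ} (hS : IsOpen S) (hS' : IsPreconnected S)
    {F G F' : ℝ → V} (hF : ∀ s ∈ S, HasDerivAt F (F' s) s)
    (hG : ∀ s ∈ S, HasDerivAt G (F' s) s) : ∃ A, ∀ s ∈ S, F s = G s + A :=
  hS.exists_eq_add_of_deriv_eq hS'
    (fun s hs => (hF s hs).differentiableAt.differentiableWithinAt)
    (fun s hs => (hG s hs).differentiableAt.differentiableWithinAt)
    (fun s hs => (hF s hs).deriv.trans (hG s hs).deriv.symm)

theorem hasDerivAt_pow_three_smul_deriv {S : Set ℝ} (hS : IsOpen S) {W : ℝ → V}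
    (hW : ContDiffOn ℝ 2 W S) {s : ℝ} (hs : s ∈ S) :
    HasDerivAt (fun t => t ^ 3 • deriv W t) ((s ^ 2 / 4) • radialLap W s) s := by
  have hW' : ContDiffOn ℝ 1 (deriv W) S := hW.deriv_of_isOpen hS (by norm_num)
  convert (hasDerivAt_pow 3 s).fun_smul ((hW'.differentiableOn one_ne_zero).hasDerivAt
    (hS.mem_nhds hs)) using 1
  unfold radialLap
  match_scalars <;> ring

theorem exists_eq_of_radialLap_eq {S : Set ℝ} (hS : IsOpen S) (hS' : IsPreconnected S)
    (hS0 : S ⊆ Ioi 0) {W : ℝ → V} (hW : ContDiffOn ℝ 2 W S) {a b c d : V}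
    (h : ∀ s ∈ S, radialLap W s = a + (s ^ 2)⁻¹ • b + s • c + s⁻¹ • d) :
    ∃ A B : V, ∀ s ∈ S, W s = A + (s ^ 2)⁻¹ • B + (s / 12) • a - (s⁻¹ / 4) • b +
      (s ^ 2 / 32) • c + (Real.log s / 8) • d := by
  -- `(s³ W')' = (s² / 4) • R` integrates to `s³ W' = Φ + C`, and `W' = s⁻³ • (Φ + C)` once more.
  obtain ⟨C, hC⟩ := exists_eq_add_of_hasDerivAt hS hS'
    (fun s hs => hasDerivAt_pow_three_smul_deriv hS hW hs)
    (G := fun s => (s ^ 3 / 12) • a + (s / 4) • b + (s ^ 4 / 16) • c + (s ^ 2 / 8) • d)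
    (fun s hs => by
      have : s ≠ 0 := (hS0 hs).ne'
      refine (((((hasDerivAt_pow 3 s).div_const 12).smul_const a).fun_add
        (((hasDerivAt_id' s).div_const 4).smul_const b)).fun_add
        (((hasDerivAt_pow 4 s).div_const 16).smul_const c)).fun_add
        (((hasDerivAt_pow 2 s).div_const 8).smul_const d) |>.congr_deriv ?_
      rw [h s hs]
      match_scalars <;> field_simp <;> ring)
  obtain ⟨A, hA⟩ := exists_eq_add_of_hasDerivAt hS hS'
    (fun s hs => ((hW.differentiableOn two_ne_zero).hasDerivAt (hS.mem_nhds hs)))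
    (G := fun s => (s ^ 2)⁻¹ • (-2⁻¹ : ℝ) • C + (s / 12) • a - (s⁻¹ / 4) • b +
      (s ^ 2 / 32) • c + (Real.log s / 8) • d)
    (fun s hs => by
      have : s ≠ 0 := (hS0 hs).ne'
      refine (((((hasDerivAt_pow 2 s).inv (pow_ne_zero 2 this)).smul_const
        ((-2⁻¹ : ℝ) • C)).fun_add (((hasDerivAt_id' s).div_const 12).smul_const a)).fun_sub
        (((hasDerivAt_inv this).div_const 4).smul_const b)).fun_add
        (((hasDerivAt_pow 2 s).div_const 32).smul_const c) |>.fun_add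
        (((Real.hasDerivAt_log this).div_const 8).smul_const d) |>.congr_deriv ?_
      rw [← inv_smul_smul₀ (pow_ne_zero 3 this) (deriv W s), hC s hs]
      match_scalars <;> field_simp <;> ring)
  exact ⟨A, (-2⁻¹ : ℝ) • C, fun s hs => by rw [hA s hs]; abel⟩

theorem exists_eq_of_radialLap_iterate_eq_zero {S : Set ℝ} (hS : IsOpen S)
    (hS' : IsPreconnected S) (hS0 : S ⊆ Ioi 0) {W : ℝ → V} (hW : ContDiffOn ℝ 6 W S)
    (h : ∀ s ∈ S, radialLap (radialLap (radialLap W)) s = 0) :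
    ∃ A B C D E F : V, ∀ s ∈ S, W s = A + (s ^ 2)⁻¹ • B + s • C + s⁻¹ • D + s ^ 2 • E +
      Real.log s • F := by
  have hW₁ : ContDiffOn ℝ 4 (radialLap W) S := hW.radialLap hS (by norm_num)
  have hW₂ : ContDiffOn ℝ 2 (radialLap (radialLap W)) S := hW₁.radialLap hS (by norm_num)
  obtain ⟨A₂, B₂, h₂⟩ := exists_eq_of_radialLap_eq hS hS' hS0 hW₂ (a := 0) (b := 0) (c := 0)
    (d := 0) fun s hs => by simp [h s hs]
  obtain ⟨A₁, B₁, h₁⟩ := exists_eq_of_radialLap_eq hS hS' hS0 (hW₁.of_le (by norm_num))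
    (a := A₂) (b := B₂) (c := 0) (d := 0) fun s hs => by simp [h₂ s hs]
  obtain ⟨A₀, B₀, h₀⟩ := exists_eq_of_radialLap_eq hS hS' hS0 (hW.of_le (by norm_num))
    (a := A₁) (b := B₁) (c := (12 : ℝ)⁻¹ • A₂) (d := -(4 : ℝ)⁻¹ • B₂)
    fun s hs => by rw [h₁ s hs]; module
  refine ⟨A₀, B₀, (12 : ℝ)⁻¹ • A₁, -(4 : ℝ)⁻¹ • B₁, (384 : ℝ)⁻¹ • A₂, -(32 : ℝ)⁻¹ • B₂,
    fun s hs => ?_⟩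
  rw [h₀ s hs]
  module

theorem MvPolynomial.IsHomogeneous.exists_clm_eval_eq {ι : Type*} [Fintype ι]
    {p : MvPolynomial ι ℝ} (hp : p.IsHomogeneous 1) :
    ∃ ℓ : EuclideanSpace ℝ ι →L[ℝ] ℝ, ∀ x, MvPolynomial.eval (fun i => x i) p = ℓ x := by
  rw [← MvPolynomial.mem_homogeneousSubmodule, MvPolynomial.homogeneousSubmodule_one_eq_span_X,
    Submodule.mem_span_range_iff_exists_fun] at hp
  obtain ⟨c, rfl⟩ := hp
  exact ⟨∑ i, c i • EuclideanSpace.proj i, fun x => by simp⟩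

theorem Set.EqOn.lap {O : Set (EuclideanSpace ℝ (Fin 4))} (hO : IsOpen O)
    {u v : EuclideanSpace ℝ (Fin 4) → V} (h : EqOn u v O) : EqOn (lap u) (lap v) O :=
  fun _ hx => (Filter.eventuallyEq_of_mem (hO.mem_nhds hx) h).lap_eq

theorem radialLap_iterate_eq_zero_of_lap {S : Set ℝ} (hS : IsOpen S) (hS0 : S ⊆ Ioi 0)
    {ℓ : EuclideanSpace ℝ (Fin 4) →L[ℝ] ℝ} (hℓ : ℓ ≠ 0) {W : ℝ → V} (hW : ContDiffOn ℝ 6 W S)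
    {u : EuclideanSpace ℝ (Fin 4) → V}
    (hu : EqOn u (fun y => ℓ y • W (‖y‖ ^ 2)) {y | ‖y‖ ^ 2 ∈ S})
    (h : ∀ x, ‖x‖ ^ 2 ∈ S → lap (lap (lap u)) x = 0) {s : ℝ} (hs : s ∈ S) :
    radialLap (radialLap (radialLap W)) s = 0 := by
  have hO : IsOpen {y : EuclideanSpace ℝ (Fin 4) | ‖y‖ ^ 2 ∈ S} := hS.preimage (by fun_prop)
  have step {W' : ℝ → V} (hW' : ContDiffOn ℝ 2 W' S) {u' : EuclideanSpace ℝ (Fin 4) → V}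
      (hu' : EqOn u' (fun y => ℓ y • W' (‖y‖ ^ 2)) {y | ‖y‖ ^ 2 ∈ S}) :
      EqOn (lap u') (fun y => ℓ y • radialLap W' (‖y‖ ^ 2)) {y | ‖y‖ ^ 2 ∈ S} :=
    fun x hx => (hu'.lap hO hx).trans (lap_smul_comp_norm_sq ℓ hS hW' hx)
  have hW₁ : ContDiffOn ℝ 4 (radialLap W) S := hW.radialLap hS (by norm_num)
  have hu₃ := step (hW₁.radialLap hS le_rfl) <| step (hW₁.of_le (by norm_num)) <|
    step (hW.of_le (by norm_num)) hu
  obtain ⟨v, hv⟩ : ∃ v, ℓ v ≠ 0 := by simpa [ContinuousLinearMap.ext_iff] using hℓ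
  have hv0 : v ≠ 0 := fun h => hv (by simp [h])
  set x : EuclideanSpace ℝ (Fin 4) := (√s / ‖v‖) • v
  have hx : ‖x‖ ^ 2 = s := by
    simp [x, norm_smul, norm_ne_zero_iff.mpr hv0, Real.sq_sqrt (hS0 hs).le, abs_of_nonneg]
  have hℓx : ℓ x ≠ 0 := by
    simp [x, hv, hv0, (Real.sqrt_pos.mpr (hS0 hs)).ne']
  have hxS : ‖x‖ ^ 2 ∈ S := hx ▸ hs
  have h0 : ℓ x • radialLap (radialLap (radialLap W)) (‖x‖ ^ 2) = 0 :=
    (hu₃ hxS).symm.trans (h x hxS)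
  rw [hx] at h0
  exact (smul_eq_zero.mp h0).resolve_left hℓx

theorem exists_eq_of_lap_iterate_eq_zero {T : Set ℝ} (hT : IsOpen T) (hT' : T.OrdConnected)
    (hT0 : T ⊆ Ioi 0) {ℓ : EuclideanSpace ℝ (Fin 4) →L[ℝ] ℝ} (hℓ : ℓ ≠ 0) {f : ℝ → V}
    (hf : ContDiffOn ℝ 6 f T)
    (hu : ∀ x, ‖x‖ ∈ T → lap (lap (lap (fun y => ℓ (‖y‖⁻¹ • y) • f ‖y‖))) x = 0) :
    ∃ A B C D E F : V, ∀ r ∈ T, f r = (r ^ 3)⁻¹ • A + r⁻¹ • B + r • C + (r * Real.log r) • D +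
      r ^ 3 • E + r ^ 5 • F := by
  set S := Ioi 0 ∩ Real.sqrt ⁻¹' T
  have hS : IsOpen S := isOpen_Ioi.inter (hT.preimage Real.continuous_sqrt)
  have hS' : IsPreconnected S :=
    (ordConnected_Ioi.inter (hT'.preimage_mono fun _ _ => Real.sqrt_le_sqrt)).isPreconnected
  have hmem {r : ℝ} (hr : 0 ≤ r) : r ^ 2 ∈ S ↔ r ∈ T := by
    simp only [S, mem_inter_iff, mem_Ioi, mem_preimage, Real.sqrt_sq hr, and_iff_right_iff_imp]
    exact fun h => pow_pos (hT0 h) 2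
  set G : ℝ → V := fun s => (√s)⁻¹ • f √s
  have hsqrt : ContDiffOn ℝ 6 Real.sqrt S := contDiffOn_id.sqrt fun s hs => hs.1.ne'
  have hG : ContDiffOn ℝ 6 G S :=
    (hsqrt.inv fun s hs => (Real.sqrt_pos.2 hs.1).ne').smul (hf.comp hsqrt fun s hs => hs.2)
  have hGf {r : ℝ} (hr : 0 ≤ r) : G (r ^ 2) = r⁻¹ • f r := by simp [G, Real.sqrt_sq hr]
  have hu' : EqOn (fun y => ℓ (‖y‖⁻¹ • y) • f ‖y‖) (fun y => ℓ y • G (‖y‖ ^ 2))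
      {y | ‖y‖ ^ 2 ∈ S} := fun y _ => by
    simp only [hGf (norm_nonneg y), map_smul, smul_eq_mul, smul_smul, mul_comm]
  obtain ⟨A, B, C, D, E, F, hW⟩ := exists_eq_of_radialLap_iterate_eq_zero hS hS'
    inter_subset_left hG fun s hs => radialLap_iterate_eq_zero_of_lap hS inter_subset_left hℓ hG hu'
      (fun x hx => hu x ((hmem (norm_nonneg x)).1 hx)) hs
  refine ⟨B, D, A, (2 : ℝ) • F, C, E, fun r hr => ?_⟩
  have hr0 : 0 < r := hT0 hr
  have hG := hW (r ^ 2) ((hmem hr0.le).2 hr)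
  rw [hGf hr0.le] at hG
  rw [← smul_inv_smul₀ hr0.ne' (f r), hG, Real.log_pow]
  match_scalars <;> field_simp

end

theorem stmt1_general (m : ℕ) (τ : ℝ) (σ : EReal) (hτ : 0 ≤ τ)
    (X : EuclideanSpace ℝ (Fin 4) → ℝ) (hX : IsHarmonicHomog 1 X) (hX0 : X ≠ 0)
    (f : ℝ → EuclideanSpace ℝ (Fin m))
    (hf : ContDiffOn ℝ 6 f {r : ℝ | τ < r ∧ (r : EReal) < σ})
    (hu : ∀ x : EuclideanSpace ℝ (Fin 4), τ < ‖x‖ → (‖x‖ : EReal) < σ →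
      lap (lap (lap (fun y => X (‖y‖⁻¹ • y) • f ‖y‖))) x = 0) :
    ∃ B : Fin 6 → EuclideanSpace ℝ (Fin m), ∀ r : ℝ, τ < r → (r : EReal) < σ →
      f r = (r ^ 3)⁻¹ • B 0 + r⁻¹ • B 1 + r • B 2 + (r * Real.log r) • B 3 +
        r ^ 3 • B 4 + r ^ 5 • B 5 := by
  obtain ⟨⟨p, hp, hXp⟩, -⟩ := hX
  obtain ⟨ℓ, hℓ⟩ := hp.exists_clm_eval_eq
  obtain rfl : X = ℓ := funext fun x => (hXp x).trans (hℓ x)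
  have hT : IsOpen {r : ℝ | τ < r ∧ (r : EReal) < σ} :=
    isOpen_Ioi.inter (isOpen_Iio.preimage continuous_coe_real_ereal)
  have hT' : {r : ℝ | τ < r ∧ (r : EReal) < σ}.OrdConnected :=
    ordConnected_Ioi.inter (ordConnected_Iio.preimage_mono EReal.coe_strictMono.monotone)
  obtain ⟨A, B, C, D, E, F, hABC⟩ := exists_eq_of_lap_iterate_eq_zero hT hT'
    (fun r hr => hτ.trans_lt hr.1) (fun h => hX0 (by simp [h])) hf fun x hx => hu x hx.1 hx.2
  exact ⟨![A, B, C, D, E, F], fun r h₁ h₂ => hABC r ⟨h₁, h₂⟩⟩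

/-- a triharmonic function of the form `f(|x|) X(x/|x|)`, with `X` a nonzero
degree-one spherical harmonic, on an annulus in `ℝ⁴` (possibly with outer radius `∞`), has
radial profile `B₁ r⁻³ + B₂ r⁻¹ + B₃ r + B₄ r ln r + B₅ r³ + B₆ r⁵`. -/
theorem stmt1 (m : ℕ) (hm : 1 ≤ m) (τ : ℝ) (σ : EReal) (hτ : 0 ≤ τ) (hτσ : (τ : EReal) < σ)
    (X : EuclideanSpace ℝ (Fin 4) → ℝ) (hX : IsHarmonicHomog 1 X) (hX0 : X ≠ 0)
    (f : ℝ → EuclideanSpace ℝ (Fin m))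
    (hf : ContDiffOn ℝ 6 f {r : ℝ | τ < r ∧ (r : EReal) < σ})
    (hu : ∀ x : EuclideanSpace ℝ (Fin 4), τ < ‖x‖ → (‖x‖ : EReal) < σ →
      lap (lap (lap (fun y => X (‖y‖⁻¹ • y) • f ‖y‖))) x = 0) :
    ∃ B : Fin 6 → EuclideanSpace ℝ (Fin m), ∀ r : ℝ, τ < r → (r : EReal) < σ →
      f r = (r ^ 3)⁻¹ • B 0 + r⁻¹ • B 1 + r • B 2 + (r * Real.log r) • B 3 +
        r ^ 3 • B 4 + r ^ 5 • B 5 :=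
  stmt1_general m τ σ hτ X hX hX0 f hf hu
end
end

section
/- Fix m ≥ 1 and a, b ∈ ℝ^m. For γ ∈ (0,1) let M^h(γ) be the 6×6 real matrix whose rows are H(γ), H'(γ), H''(γ), H(1), H'(1), H''(1), where H(r) = (r^{-5}, r^{-3}, r^{-1}, r³, r⁵, r⁷) and primes denote derivatives in r. Then for all sufficiently small γ > 0 the matrix M^h(γ) is invertible, and the unique solution (D₁(γ),…,D₆(γ)) ∈ (ℝ^m)⁶ of the componentwise linear system M^h(γ)·(D₁,…,D₆)ᵀ = (a/(6γ), −a/(6γ²), a/(3γ³), b/6, b/2, b)ᵀ satisfies, as γ → 0⁺: D₁ = (3a − b/2)γ⁸ + O(γ¹⁰), D₂ = (−8a + (4/3)b)γ⁶ + O(γ⁸), D₃ = (1/6)(1+36γ⁴)a − γ⁴ b + O(γ⁶), D₄ = (−a + b/6)(1+36γ⁴) + O(γ⁶), D₅ = (4/3)(1+36γ⁴)a − 8γ⁴ b + O(γ⁶), D₆ = −(1/2)(1+36γ⁴)a + 3γ⁴ b + O(γ⁶). -/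
open Matrix

noncomputable section

/-- `H(r) = (r⁻⁵, r⁻³, r⁻¹, r³, r⁵, r⁷)`. -/
def Hvec (r : ℝ) : Fin 6 → ℝ :=
  ![(r ^ 5)⁻¹, (r ^ 3)⁻¹, r⁻¹, r ^ 3, r ^ 5, r ^ 7]

/-- The 6×6 matrix whose rows are `H(γ), H'(γ), H''(γ), H(1), H'(1), H''(1)`. -/
def Mh (γ : ℝ) : Matrix (Fin 6) (Fin 6) ℝ := Matrix.of
  ![Hvec γ,
    fun j => deriv (fun r => Hvec r j) γ,
    fun j => deriv (deriv (fun r => Hvec r j)) γ,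
    Hvec 1,
    fun j => deriv (fun r => Hvec r j) 1,
    fun j => deriv (deriv (fun r => Hvec r j)) 1]

/-!
Multiplying the first three rows of `M^h(γ)` by `γ⁷` clears all denominators; the resulting
polynomial matrix has determinant `256 γ⁹ p(γ)` with `p(0) = 1`, so `det M^h(γ) = 256 p(γ) / γ¹²`
does not vanish for small `γ`. The system is linear in `(a, b)`, hence `Dᵢ = αᵢ(γ) a + βᵢ(γ) b`,
where `α` and `β` solve it for the scalar right-hand sides `(1/(6γ), -1/(6γ²), 1/(3γ³), 0, 0, 0)`
and `(0, 0, 0, 1/6, 1/2, 1)`; by Cramer's rule they are polynomials divided by `p`. For each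
claimed leading term `ℓᵢ`, the numerator minus `ℓᵢ p` is `γ^kᵢ` times a polynomial, and a
polynomial divided by `p` stays bounded near `0`.
-/

open Filter Topology

lemma exists_eventually_abs_div_sub_le {ι : Type*} [Fintype ι] {p : ℝ → ℝ} {q e r : ℝ → ι → ℝ}
    {k : ι → ℕ} (hp : ContinuousAt p 0) (hp0 : p 0 ≠ 0) (hr : ContinuousAt r 0)
    (h : ∀ x i, q x i - e x i * p x = x ^ k i * r x i) :
    ∃ C > 0, ∀ᶠ x in 𝓝 0, p x ≠ 0 ∧ ∀ i, |q x i / p x - e x i| ≤ C * |x| ^ k i := by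
  set v : ℝ → ι → ℝ := fun x => (p x)⁻¹ • r x
  have hv : ContinuousAt v 0 := (hp.inv₀ hp0).smul hr
  refine ⟨‖v 0‖ + 1, by positivity, ?_⟩
  filter_upwards [hp.eventually_ne hp0,
    hv.norm.eventually_lt continuousAt_const (lt_add_one _)] with x hpx hvx
  refine ⟨hpx, fun i => ?_⟩
  have hquot : q x i / p x - e x i = x ^ k i * v x i := by
    simp only [v, Pi.smul_apply, smul_eq_mul]
    field_simp
    linear_combination h x i
  calc |q x i / p x - e x i| = |v x i| * |x| ^ k i := by rw [hquot, abs_mul, abs_pow, mul_comm]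
    _ ≤ (‖v 0‖ + 1) * |x| ^ k i := by
      gcongr
      exact (norm_le_pi_norm (v x) i).trans hvx.le

lemma eq_smul_add_smul_of_mulVec_eq {𝕜 ι κ : Type*} [RCLike 𝕜] [Fintype ι] [DecidableEq ι]
    {M : Matrix ι ι 𝕜} (hM : M.det ≠ 0) {α β u v : ι → 𝕜} (hα : M *ᵥ α = u) (hβ : M *ᵥ β = v)
    {a b : EuclideanSpace 𝕜 κ} {D : ι → EuclideanSpace 𝕜 κ}
    (hD : ∀ l, M *ᵥ (fun i => D i l) = fun i => (u i • a + v i • b) l) (i : ι) :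
    D i = α i • a + β i • b := by
  have hinj : Function.Injective M.mulVec := by
    rw [mulVec_injective_iff_isUnit, isUnit_iff_isUnit_det]
    exact hM.isUnit
  ext l
  have hl : (fun i => D i l) = a l • α + b l • β := by
    apply hinj
    rw [hD l, mulVec_add, mulVec_smul, mulVec_smul, hα, hβ]
    ext j
    simp [mul_comm]
  simpa [mul_comm] using congrFun hl i

lemma norm_smul_add_smul_sub_le {E : Type*} [SeminormedAddCommGroup E] [NormedSpace ℝ E]
    {s t s' t' c : ℝ} (a b : E) (hs : |s - s'| ≤ c) (ht : |t - t'| ≤ c) :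
    ‖(s • a + t • b) - (s' • a + t' • b)‖ ≤ c * (‖a‖ + ‖b‖) :=
  calc ‖(s • a + t • b) - (s' • a + t' • b)‖ = ‖(s - s') • a + (t - t') • b‖ := by
        congr 1; module
    _ ≤ |s - s'| * ‖a‖ + |t - t'| * ‖b‖ := by
        refine (norm_add_le _ _).trans_eq ?_
        rw [norm_smul, norm_smul, Real.norm_eq_abs, Real.norm_eq_abs]
    _ ≤ c * (‖a‖ + ‖b‖) := by rw [mul_add]; gcongr

def hvecExp : Fin 6 → ℤ := ![-5, -3, -1, 3, 5, 7]

lemma Hvec_apply (r : ℝ) (j : Fin 6) : Hvec r j = r ^ hvecExp j := by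
  fin_cases j <;> simp [Hvec, hvecExp, _root_.zpow_neg]

def MhPoly (r : ℝ) : Matrix (Fin 6) (Fin 6) ℝ := Matrix.of
  ![![r ^ 2, r ^ 4, r ^ 6, r ^ 10, r ^ 12, r ^ 14],
    ![-5 * r, -3 * r ^ 3, -r ^ 5, 3 * r ^ 9, 5 * r ^ 11, 7 * r ^ 13],
    ![30, 12 * r ^ 2, 2 * r ^ 4, 6 * r ^ 8, 20 * r ^ 10, 42 * r ^ 12],
    ![1, 1, 1, 1, 1, 1],
    ![-5, -3, -1, 3, 5, 7],
    ![30, 12, 2, 6, 20, 42]]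

lemma Mh_eq_diagonal_mul (γ : ℝ) (hγ : γ ≠ 0) :
    Mh γ = diagonal ![(γ ^ 7)⁻¹, (γ ^ 7)⁻¹, (γ ^ 7)⁻¹, 1, 1, 1] * MhPoly γ := by
  ext i j
  rw [diagonal_mul]
  fin_cases i <;> fin_cases j <;>
    simp only [Mh, MhPoly, Hvec_apply, hvecExp, deriv_zpow', deriv_const_mul_field', of_apply,
      cons_val, Fin.reduceFinMk, Fin.zero_eta, Fin.mk_one, _root_.zpow_neg, zpow_ofNat,
      Int.reduceNeg, Int.reduceSub, Int.cast_ofNat, Int.cast_neg, _root_.one_zpow] <;>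
    field_simp <;> ring

def detPoly (x : ℝ) : ℝ :=
  1 - 36 * x ^ 4 + 160 * x ^ 6 - 315 * x ^ 8 + 288 * x ^ 10 - 288 * x ^ 14 + 315 * x ^ 16
    - 160 * x ^ 18 + 36 * x ^ 20 - x ^ 24

lemma det_MhPoly (r : ℝ) : (MhPoly r).det = 256 * r ^ 9 * detPoly r := by
  simp only [MhPoly, det_succ_row_zero, Fin.sum_univ_succ, Fin.sum_univ_zero, det_fin_zero,
    submatrix_apply, of_apply, Fin.succAbove, cons_val, Fin.reduceSucc, Fin.reduceCastSucc,
    Fin.reduceLT, ↓reduceIte, Fin.val_succ, Fin.val_zero]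
  rw [detPoly]
  ring

lemma det_Mh (γ : ℝ) (hγ : γ ≠ 0) : (Mh γ).det = 256 * detPoly γ / γ ^ 12 := by
  rw [Mh_eq_diagonal_mul γ hγ, det_mul, det_diagonal, det_MhPoly, Fin.prod_univ_six]
  simp only [cons_val_zero, cons_val_one, cons_val, mul_one]
  field_simp

lemma det_Mh_ne_zero (γ : ℝ) (hγ : γ ≠ 0) (hp : detPoly γ ≠ 0) : (Mh γ).det ≠ 0 := by
  rw [det_Mh γ hγ]
  exact div_ne_zero (mul_ne_zero (by norm_num) hp) (pow_ne_zero _ hγ)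

def numA (x : ℝ) : Fin 6 → ℝ :=
  ![3 * x ^ 8 - 8 * x ^ 10 + 5 * x ^ 12 + 5 * x ^ 16 - 8 * x ^ 18 + 3 * x ^ 20,
    -8 * x ^ 6 + 20 * x ^ 8 - 12 * x ^ 10 - 12 * x ^ 16 + 20 * x ^ 18 - 8 * x ^ 20,
    1 / 6 + 40 / 3 * x ^ 6 - 45 * x ^ 8 + 48 * x ^ 10 - 50 / 3 * x ^ 12 + 15 / 2 * x ^ 16
      - 40 / 3 * x ^ 18 + 6 * x ^ 20,
    -1 + 25 * x ^ 8 - 48 * x ^ 10 + 25 * x ^ 12 - x ^ 20,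
    4 / 3 - 40 / 3 * x ^ 6 + 12 * x ^ 8 + 12 * x ^ 10 - 40 / 3 * x ^ 12 + 4 / 3 * x ^ 18,
    -1 / 2 + 8 * x ^ 6 - 15 * x ^ 8 + 8 * x ^ 10 - 1 / 2 * x ^ 16]

def numB (x : ℝ) : Fin 6 → ℝ :=
  ![-1 / 2 * x ^ 8 + 8 * x ^ 14 - 15 * x ^ 16 + 8 * x ^ 18 - 1 / 2 * x ^ 24,
    4 / 3 * x ^ 6 - 40 / 3 * x ^ 12 + 12 * x ^ 14 + 12 * x ^ 16 - 40 / 3 * x ^ 18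
      + 4 / 3 * x ^ 24,
    -x ^ 4 + 25 * x ^ 12 - 48 * x ^ 14 + 25 * x ^ 16 - x ^ 24,
    1 / 6 + 40 / 3 * x ^ 6 - 45 * x ^ 8 + 48 * x ^ 10 - 50 / 3 * x ^ 12 + 15 / 2 * x ^ 16
      - 40 / 3 * x ^ 18 + 6 * x ^ 20,
    -8 * x ^ 4 + 20 * x ^ 6 - 12 * x ^ 8 - 12 * x ^ 14 + 20 * x ^ 16 - 8 * x ^ 18,
    3 * x ^ 4 - 8 * x ^ 6 + 5 * x ^ 8 + 5 * x ^ 12 - 8 * x ^ 14 + 3 * x ^ 16]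

lemma MhPoly_mulVec_numA (x : ℝ) :
    MhPoly x *ᵥ numA x = detPoly x • ![x ^ 6 / 6, -x ^ 5 / 6, x ^ 4 / 3, 0, 0, 0] := by
  ext i
  fin_cases i <;>
    simp only [MhPoly, numA, detPoly, mulVec, dotProduct, Fin.sum_univ_six, of_apply,
      Pi.smul_apply, smul_eq_mul, Fin.reduceFinMk, Fin.zero_eta, Fin.mk_one, cons_val] <;>
    ring

lemma MhPoly_mulVec_numB (x : ℝ) :
    MhPoly x *ᵥ numB x = detPoly x • ![0, 0, 0, 6⁻¹, 2⁻¹, 1] := by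
  ext i
  fin_cases i <;>
    simp only [MhPoly, numB, detPoly, mulVec, dotProduct, Fin.sum_univ_six, of_apply,
      Pi.smul_apply, smul_eq_mul, Fin.reduceFinMk, Fin.zero_eta, Fin.mk_one, cons_val] <;>
    ring

def solA (x : ℝ) : Fin 6 → ℝ := fun i => numA x i / detPoly x

def solB (x : ℝ) : Fin 6 → ℝ := fun i => numB x i / detPoly x

lemma Mh_mulVec_solA (γ : ℝ) (hγ : γ ≠ 0) (hp : detPoly γ ≠ 0) :
    Mh γ *ᵥ solA γ = ![(6 * γ)⁻¹, -(6 * γ ^ 2)⁻¹, (3 * γ ^ 3)⁻¹, 0, 0, 0] := by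
  have hsol : solA γ = (detPoly γ)⁻¹ • numA γ := by ext i; simp [solA, div_eq_inv_mul]
  rw [hsol, Mh_eq_diagonal_mul γ hγ, ← mulVec_mulVec, mulVec_smul, MhPoly_mulVec_numA, smul_smul,
    inv_mul_cancel₀ hp, one_smul]
  ext i
  fin_cases i <;>
    simp only [mulVec_diagonal, Fin.reduceFinMk, Fin.zero_eta, Fin.mk_one, cons_val] <;>
    field_simp

lemma Mh_mulVec_solB (γ : ℝ) (hγ : γ ≠ 0) (hp : detPoly γ ≠ 0) :
    Mh γ *ᵥ solB γ = ![0, 0, 0, 6⁻¹, 2⁻¹, 1] := by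
  have hsol : solB γ = (detPoly γ)⁻¹ • numB γ := by ext i; simp [solB, div_eq_inv_mul]
  rw [hsol, Mh_eq_diagonal_mul γ hγ, ← mulVec_mulVec, mulVec_smul, MhPoly_mulVec_numB, smul_smul,
    inv_mul_cancel₀ hp, one_smul]
  ext i
  fin_cases i <;> simp [mulVec_diagonal]

lemma eq_solA_smul_add_solB_smul {m : ℕ} {γ : ℝ} (hγ : γ ≠ 0) (hp : detPoly γ ≠ 0)
    {a b : EuclideanSpace ℝ (Fin m)} {D : Fin 6 → EuclideanSpace ℝ (Fin m)}
    (hD : ∀ l : Fin m, Mh γ *ᵥ (fun i => D i l) =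
      fun i => (![(6 * γ)⁻¹ • a, -((6 * γ ^ 2)⁻¹ • a), (3 * γ ^ 3)⁻¹ • a,
        (6 : ℝ)⁻¹ • b, (2 : ℝ)⁻¹ • b, b] : Fin 6 → EuclideanSpace ℝ (Fin m)) i l) (i : Fin 6) :
    D i = solA γ i • a + solB γ i • b := by
  refine eq_smul_add_smul_of_mulVec_eq (det_Mh_ne_zero γ hγ hp) (Mh_mulVec_solA γ hγ hp)
    (Mh_mulVec_solB γ hγ hp) (fun l => (hD l).trans ?_) i
  ext j
  fin_cases j <;> simp [neg_smul]

def leadA (x : ℝ) : Fin 6 → ℝ :=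
  ![3 * x ^ 8, -8 * x ^ 6, (1 + 36 * x ^ 4) / 6, -(1 + 36 * x ^ 4), 4 / 3 * (1 + 36 * x ^ 4),
    -(1 + 36 * x ^ 4) / 2]

def leadB (x : ℝ) : Fin 6 → ℝ :=
  ![-x ^ 8 / 2, 4 / 3 * x ^ 6, -x ^ 4, (1 + 36 * x ^ 4) / 6, -8 * x ^ 4, 3 * x ^ 4]

def errOrder : Fin 6 → ℕ := ![10, 8, 6, 6, 6, 6]

def remA (x : ℝ) : Fin 6 → ℝ :=
  ![-8 + 113 * x ^ 2 - 480 * x ^ 4 + 950 * x ^ 6 - 872 * x ^ 8 + 3 * x ^ 10 + 864 * x ^ 12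
      - 945 * x ^ 14 + 480 * x ^ 16 - 108 * x ^ 18 + 3 * x ^ 22,
    20 - 300 * x ^ 2 + 1280 * x ^ 4 - 2520 * x ^ 6 + 2292 * x ^ 8 + 20 * x ^ 10 - 2312 * x ^ 12
      + 2520 * x ^ 14 - 1280 * x ^ 16 + 288 * x ^ 18 - 8 * x ^ 22,
    -40 / 3 + 447 / 2 * x ^ 2 - 960 * x ^ 4 + 5620 / 3 * x ^ 6 - 1680 * x ^ 8 - 45 * x ^ 10
      + 5224 / 3 * x ^ 12 - 1890 * x ^ 14 + 960 * x ^ 16 - 1295 / 6 * x ^ 18 + 6 * x ^ 22,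
    160 - 1586 * x ^ 2 + 6000 * x ^ 4 - 11315 * x ^ 6 + 10080 * x ^ 8 + 315 * x ^ 10
      - 10528 * x ^ 12 + 11375 * x ^ 14 - 5760 * x ^ 16 + 1295 * x ^ 18 - 36 * x ^ 22,
    -680 / 3 + 2160 * x ^ 2 - 8052 * x ^ 4 + 45320 / 3 * x ^ 6 - 13440 * x ^ 8 - 420 * x ^ 10
      + 42116 / 3 * x ^ 12 - 15168 * x ^ 14 + 7680 * x ^ 16 - 5180 / 3 * x ^ 18 + 48 * x ^ 22,
    88 - 1641 / 2 * x ^ 2 + 3032 * x ^ 4 - 5670 * x ^ 6 + 5040 * x ^ 8 + 157 * x ^ 10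
      - 5264 * x ^ 12 + 5688 * x ^ 14 - 2880 * x ^ 16 + 1295 / 2 * x ^ 18 - 18 * x ^ 22]

def remB (x : ℝ) : Fin 6 → ℝ :=
  ![-18 * x ^ 2 + 88 * x ^ 4 - 345 / 2 * x ^ 6 + 152 * x ^ 8 - 144 * x ^ 12 + 157 * x ^ 14
      - 80 * x ^ 16 + 18 * x ^ 18 - 1 / 2 * x ^ 22,
    48 * x ^ 2 - 680 / 3 * x ^ 4 + 432 * x ^ 6 - 372 * x ^ 8 - 40 / 3 * x ^ 10 + 384 * x ^ 12
      - 420 * x ^ 14 + 644 / 3 * x ^ 16 - 48 * x ^ 18 + 4 / 3 * x ^ 22,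
    -36 * x ^ 2 + 160 * x ^ 4 - 290 * x ^ 6 + 240 * x ^ 8 + 25 * x ^ 10 - 288 * x ^ 12
      + 315 * x ^ 14 - 160 * x ^ 16 + 35 * x ^ 18 - x ^ 22,
    -40 / 3 + 447 / 2 * x ^ 2 - 960 * x ^ 4 + 5620 / 3 * x ^ 6 - 1680 * x ^ 8 - 45 * x ^ 10
      + 5224 / 3 * x ^ 12 - 1890 * x ^ 14 + 960 * x ^ 16 - 1295 / 6 * x ^ 18 + 6 * x ^ 22,
    20 - 300 * x ^ 2 + 1280 * x ^ 4 - 2520 * x ^ 6 + 2292 * x ^ 8 + 20 * x ^ 10 - 2312 * x ^ 12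
      + 2520 * x ^ 14 - 1280 * x ^ 16 + 288 * x ^ 18 - 8 * x ^ 22,
    -8 + 113 * x ^ 2 - 480 * x ^ 4 + 950 * x ^ 6 - 872 * x ^ 8 + 3 * x ^ 10 + 864 * x ^ 12
      - 945 * x ^ 14 + 480 * x ^ 16 - 108 * x ^ 18 + 3 * x ^ 22]

lemma numA_sub_leadA_mul_detPoly (x : ℝ) (i : Fin 6) :
    numA x i - leadA x i * detPoly x = x ^ errOrder i * remA x i := by
  fin_cases i <;>
    simp only [numA, leadA, remA, detPoly, errOrder, Fin.reduceFinMk, Fin.zero_eta, Fin.mk_one,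
      cons_val] <;>
    ring

lemma numB_sub_leadB_mul_detPoly (x : ℝ) (i : Fin 6) :
    numB x i - leadB x i * detPoly x = x ^ errOrder i * remB x i := by
  fin_cases i <;>
    simp only [numB, leadB, remB, detPoly, errOrder, Fin.reduceFinMk, Fin.zero_eta, Fin.mk_one,
      cons_val] <;>
    ring

lemma continuous_detPoly : Continuous detPoly := by
  unfold detPoly; fun_prop

lemma continuous_remA : Continuous remA :=
  continuous_pi fun i => by fin_cases i <;> simp only [remA] <;> fun_prop

lemma continuous_remB : Continuous remB :=
  continuous_pi fun i => by fin_cases i <;> simp only [remB] <;> fun_prop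

lemma exists_eventually_sol_sub_lead_le : ∃ C > 0, ∀ᶠ x in 𝓝 0, detPoly x ≠ 0 ∧ ∀ i,
    |solA x i - leadA x i| ≤ C * |x| ^ errOrder i ∧
      |solB x i - leadB x i| ≤ C * |x| ^ errOrder i := by
  have hp0 : detPoly 0 ≠ 0 := by norm_num [detPoly]
  obtain ⟨CA, hCA, hA⟩ := exists_eventually_abs_div_sub_le continuous_detPoly.continuousAt hp0
    continuous_remA.continuousAt numA_sub_leadA_mul_detPoly
  obtain ⟨CB, -, hB⟩ := exists_eventually_abs_div_sub_le continuous_detPoly.continuousAt hp0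
    continuous_remB.continuousAt numB_sub_leadB_mul_detPoly
  refine ⟨max CA CB, lt_max_of_lt_left hCA, ?_⟩
  filter_upwards [hA, hB] with x ⟨hpx, hAx⟩ ⟨_, hBx⟩
  refine ⟨hpx, fun i => ⟨(hAx i).trans ?_, (hBx i).trans ?_⟩⟩ <;> gcongr
  exacts [le_max_left _ _, le_max_right _ _]

theorem stmt8_general (m : ℕ) (a b : EuclideanSpace ℝ (Fin m)) :
    ∃ γ₀ > (0 : ℝ), ∃ K > (0 : ℝ), ∀ γ : ℝ, 0 < γ → γ < γ₀ →
      (Mh γ).det ≠ 0 ∧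
      ∀ D : Fin 6 → EuclideanSpace ℝ (Fin m),
        (∀ l : Fin m, Mh γ *ᵥ (fun i => D i l) =
          fun i => (![(6 * γ)⁻¹ • a, -((6 * γ ^ 2)⁻¹ • a), (3 * γ ^ 3)⁻¹ • a,
            (6 : ℝ)⁻¹ • b, (2 : ℝ)⁻¹ • b, b] : Fin 6 → EuclideanSpace ℝ (Fin m)) i l) →
        ‖D 0 - γ ^ 8 • ((3 : ℝ) • a - (2 : ℝ)⁻¹ • b)‖ ≤ K * γ ^ 10 ∧
        ‖D 1 - γ ^ 6 • ((-8 : ℝ) • a + (4 / 3 : ℝ) • b)‖ ≤ K * γ ^ 8 ∧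
        ‖D 2 - ((6⁻¹ * (1 + 36 * γ ^ 4)) • a - γ ^ 4 • b)‖ ≤ K * γ ^ 6 ∧
        ‖D 3 - (1 + 36 * γ ^ 4) • ((-1 : ℝ) • a + (6 : ℝ)⁻¹ • b)‖ ≤ K * γ ^ 6 ∧
        ‖D 4 - ((4 / 3 * (1 + 36 * γ ^ 4)) • a - (8 * γ ^ 4) • b)‖ ≤ K * γ ^ 6 ∧
        ‖D 5 - (-(2⁻¹ * (1 + 36 * γ ^ 4)) • a + (3 * γ ^ 4) • b)‖ ≤ K * γ ^ 6 := by
  obtain ⟨C, hC, hsmall⟩ := exists_eventually_sol_sub_lead_le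
  obtain ⟨γ₀, hγ₀, hball⟩ := Metric.eventually_nhds_iff.1 hsmall
  refine ⟨γ₀, hγ₀, C * (‖a‖ + ‖b‖) + 1, by positivity, fun γ hγ hγγ₀ => ?_⟩
  obtain ⟨hp, hsol⟩ := hball (by rwa [Real.dist_0_eq_abs, abs_of_pos hγ])
  refine ⟨det_Mh_ne_zero γ hγ.ne' hp, fun D hD => ?_⟩
  have herr (i : Fin 6) :
      ‖D i - (leadA γ i • a + leadB γ i • b)‖ ≤ (C * (‖a‖ + ‖b‖) + 1) * γ ^ errOrder i := by
    obtain ⟨hAi, hBi⟩ := hsol i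
    rw [abs_of_pos hγ] at hAi hBi
    rw [eq_solA_smul_add_solB_smul hγ.ne' hp hD i]
    refine (norm_smul_add_smul_sub_le a b hAi hBi).trans ?_
    nlinarith [pow_pos hγ (errOrder i)]
  refine ⟨?_, ?_, ?_, ?_, ?_, ?_⟩
  · refine (herr 0).trans_eq' (congrArg (‖D 0 - ·‖) ?_)
    simp only [leadA, leadB, cons_val]
    module
  · refine (herr 1).trans_eq' (congrArg (‖D 1 - ·‖) ?_)
    simp only [leadA, leadB, cons_val]
    module
  · refine (herr 2).trans_eq' (congrArg (‖D 2 - ·‖) ?_)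
    simp only [leadA, leadB, cons_val]
    module
  · refine (herr 3).trans_eq' (congrArg (‖D 3 - ·‖) ?_)
    simp only [leadA, leadB, cons_val]
    module
  · refine (herr 4).trans_eq' (congrArg (‖D 4 - ·‖) ?_)
    simp only [leadA, leadB, cons_val]
    module
  · refine (herr 5).trans_eq' (congrArg (‖D 5 - ·‖) ?_)
    simp only [leadA, leadB, cons_val]
    module

/-- asymptotics, as `γ → 0⁺`, of the solution of the componentwise linear system
`M^h(γ)·(D₁,…,D₆)ᵀ = (a/(6γ), −a/(6γ²), a/(3γ³), b/6, b/2, b)ᵀ`. -/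
theorem stmt8 (m : ℕ) (hm : 1 ≤ m) (a b : EuclideanSpace ℝ (Fin m)) :
    ∃ γ₀ > (0 : ℝ), ∃ K > (0 : ℝ), ∀ γ : ℝ, 0 < γ → γ < γ₀ →
      (Mh γ).det ≠ 0 ∧
      ∀ D : Fin 6 → EuclideanSpace ℝ (Fin m),
        (∀ l : Fin m, Mh γ *ᵥ (fun i => D i l) =
          fun i => (![(6 * γ)⁻¹ • a, -((6 * γ ^ 2)⁻¹ • a), (3 * γ ^ 3)⁻¹ • a,
            (6 : ℝ)⁻¹ • b, (2 : ℝ)⁻¹ • b, b] : Fin 6 → EuclideanSpace ℝ (Fin m)) i l) →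
        ‖D 0 - γ ^ 8 • ((3 : ℝ) • a - (2 : ℝ)⁻¹ • b)‖ ≤ K * γ ^ 10 ∧
        ‖D 1 - γ ^ 6 • ((-8 : ℝ) • a + (4 / 3 : ℝ) • b)‖ ≤ K * γ ^ 8 ∧
        ‖D 2 - ((6⁻¹ * (1 + 36 * γ ^ 4)) • a - γ ^ 4 • b)‖ ≤ K * γ ^ 6 ∧
        ‖D 3 - (1 + 36 * γ ^ 4) • ((-1 : ℝ) • a + (6 : ℝ)⁻¹ • b)‖ ≤ K * γ ^ 6 ∧
        ‖D 4 - ((4 / 3 * (1 + 36 * γ ^ 4)) • a - (8 * γ ^ 4) • b)‖ ≤ K * γ ^ 6 ∧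
        ‖D 5 - (-(2⁻¹ * (1 + 36 * γ ^ 4)) • a + (3 * γ ^ 4) • b)‖ ≤ K * γ ^ 6 :=
  stmt8_general m a b
end
end

section
/- Let k ≥ 1 and let P̊ = (P̊₁,…,P̊ₖ) and R̊ = (R̊₁,…,R̊ₖ) be k-tuples of symmetric traceless real 4×4 matrices. Then there exist orthogonal matrices S ∈ O(4) and T ∈ O(k) such that Σ_{i,j=1}^{k} T_{ij} · Tr(S P̊ⱼ Sᵀ R̊ᵢ) ≥ 0. Furthermore, if P̊ ≠ 0 and R̊ ≠ 0 (i.e., some P̊ⱼ ≠ 0 and some R̊ᵢ ≠ 0), then S and T can be chosen so that Σ_{i,j=1}^{k} T_{ij} · Tr(S P̊ⱼ Sᵀ R̊ᵢ) > 0. -/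
/-!
Choose `P̊ⱼ₀ ≠ 0` and `R̊ᵢ₀ ≠ 0` and diagonalize them orthogonally, with eigenvalues `d` and `e`.
If `S` maps the eigenbasis of `P̊ⱼ₀` onto that of `R̊ᵢ₀` up to a permutation `σ`, then
`Tr(S P̊ⱼ₀ Sᵀ R̊ᵢ₀) = ∑ d (σ i) * e i`. Tracelessness makes neither spectrum constant, and composing
`σ` with a transposition changes this sum by `(d p - d q) * (e a - e b) ≠ 0`, so some `σ` makes
it nonzero. Once an entry `C i₀ j₀` of the `k × k` matrix `C i j = Tr(S P̊ⱼ Sᵀ R̊ᵢ)` is nonzero,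
a signed permutation matrix `T` turns the pairing into `∑ i, |C i (τ i)| ≥ |C i₀ j₀| > 0` for a
permutation `τ` with `τ i₀ = j₀`; with `S = 1` the same construction gives the weak inequality.
-/

open Matrix Equiv

theorem exists_perm_apply_eq_apply_eq {n : Type*} [DecidableEq n] {a b p q : n} (hab : a ≠ b)
    (hpq : p ≠ q) : ∃ σ : Perm n, σ a = p ∧ σ b = q := by
  have hb : swap a p b ≠ p := by
    simpa only [swap_apply_left] using (swap a p).injective.ne hab.symm
  exact ⟨swap (swap a p b) q * swap a p,
    by simp [swap_apply_of_ne_of_ne hb.symm hpq], by simp⟩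

section Permutations

variable {n R : Type*} [Fintype n] [DecidableEq n] [CommRing R]

theorem sum_mul_sub_sum_mul_swap (d e : n → R) (σ : Perm n) {a b : n} (hab : a ≠ b) :
    ∑ i, d (σ i) * e i - ∑ i, d ((σ * swap a b) i) * e i = (d (σ a) - d (σ b)) * (e a - e b) := by
  have hreindex : ∑ i, d ((σ * swap a b) i) * e i = ∑ i, d (σ i) * e (swap a b i) := by
    simpa using (Equiv.sum_comp (swap a b) fun i => d (σ (swap a b i)) * e i).symm
  rw [hreindex, ← Finset.sum_sub_distrib, Fintype.sum_eq_add a b hab]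
  · simp only [swap_apply_left, swap_apply_right]
    ring
  · rintro i ⟨hia, hib⟩
    rw [swap_apply_of_ne_of_ne hia hib, sub_self]

theorem exists_perm_sum_mul_ne_zero [NoZeroDivisors R] {d e : n → R} {p q a b : n}
    (hpq : d p ≠ d q) (hab : e a ≠ e b) : ∃ σ : Perm n, ∑ i, d (σ i) * e i ≠ 0 := by
  have hab' : a ≠ b := fun h => hab (congrArg e h)
  obtain ⟨σ, hσa, hσb⟩ := exists_perm_apply_eq_apply_eq hab' fun h => hpq (congrArg d h)
  by_contra! h
  have hdiff := sum_mul_sub_sum_mul_swap d e σ hab'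
  rw [h, h, sub_self, hσa, hσb, eq_comm, mul_eq_zero, sub_eq_zero, sub_eq_zero] at hdiff
  exact hdiff.elim hpq hab

theorem permMatrix_mul_diagonal_mul_transpose (σ : Perm n) (d : n → R) :
    σ.permMatrix R * diagonal d * (σ.permMatrix R)ᵀ = diagonal (d ∘ σ) := by
  rw [transpose_permMatrix, PEquiv.toMatrix_toPEquiv_mul, PEquiv.mul_toMatrix_toPEquiv,
    Perm.inv_def, symm_symm, submatrix_submatrix, Function.id_comp, Function.comp_id,
    submatrix_diagonal_equiv]

theorem permMatrix_mem_orthogonalGroup (σ : Perm n) :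
    σ.permMatrix R ∈ orthogonalGroup n R := by
  rw [mem_orthogonalGroup_iff', transpose_permMatrix, ← permMatrix_mul, mul_inv_cancel,
    permMatrix_one]

theorem diagonal_mem_orthogonalGroup {ε : n → R} (hε : ∀ i, ε i * ε i = 1) :
    diagonal ε ∈ orthogonalGroup n R := by
  rw [mem_orthogonalGroup_iff', diagonal_transpose, diagonal_mul_diagonal, funext hε, diagonal_one]

theorem transpose_mem_orthogonalGroup {U : Matrix n n R} (hU : U ∈ orthogonalGroup n R) :
    Uᵀ ∈ orthogonalGroup n R := by
  rw [mem_orthogonalGroup_iff, transpose_transpose]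
  exact (mem_orthogonalGroup_iff' n R).mp hU

end Permutations

section Real

variable {n : Type*} [Fintype n] [DecidableEq n]

theorem exists_orthogonal_sum_mul_eq_sum_abs (C : Matrix n n ℝ) (τ : Perm n) :
    ∃ T ∈ orthogonalGroup n ℝ, ∑ i, ∑ j, T i j * C i j = ∑ i, |C i (τ i)| := by
  set ε : n → ℝ := fun i => if 0 ≤ C i (τ i) then 1 else -1
  refine ⟨diagonal ε * τ.permMatrix ℝ,
    mul_mem (diagonal_mem_orthogonalGroup fun i => by simp only [ε]; split_ifs <;> norm_num)
      (permMatrix_mem_orthogonalGroup τ), Finset.sum_congr rfl fun i _ => ?_⟩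
  simp only [diagonal_mul, PEquiv.toMatrix_apply, toPEquiv_apply, Option.mem_def,
    Option.some.injEq, mul_ite, mul_one, mul_zero, ite_mul, zero_mul, Finset.sum_ite_eq,
    Finset.mem_univ, if_true, ε]
  split_ifs with h
  · rw [one_mul, abs_of_nonneg h]
  · rw [neg_one_mul, abs_of_neg (not_le.mp h)]

theorem Matrix.IsHermitian.eq_eigenvectorUnitary_mul_diagonal_mul_transpose {A : Matrix n n ℝ}
    (hA : A.IsHermitian) :
    A = (hA.eigenvectorUnitary : Matrix n n ℝ) * diagonal hA.eigenvalues *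
      (hA.eigenvectorUnitary : Matrix n n ℝ)ᵀ := by
  conv_lhs => rw [hA.spectral_theorem]
  simp [Unitary.conjStarAlgAut_apply, star_eq_conjTranspose]

theorem Matrix.IsHermitian.exists_eigenvalues_ne {A : Matrix n n ℝ} (hA : A.IsHermitian)
    (htr : A.trace = 0) (h0 : A ≠ 0) : ∃ p q, hA.eigenvalues p ≠ hA.eigenvalues q := by
  obtain ⟨p, hp⟩ := Function.ne_iff.mp (hA.eigenvalues_eq_zero_iff.not.mpr h0)
  refine ⟨p, ?_⟩
  by_contra! hconst
  have hsum : ∑ q, hA.eigenvalues q = 0 := by simpa [htr] using hA.trace_eq_sum_eigenvalues.symm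
  rw [Finset.sum_congr rfl fun q _ => (hconst q).symm, Finset.sum_const, Finset.card_univ,
    nsmul_eq_mul, mul_eq_zero, Nat.cast_eq_zero] at hsum
  exact hsum.elim (Fintype.card_pos_iff.mpr ⟨p⟩).ne' hp

theorem exists_orthogonal_trace_mul_ne_zero {A B : Matrix n n ℝ} (hA : A.IsHermitian)
    (hB : B.IsHermitian) {p q a b : n} (hpq : hA.eigenvalues p ≠ hA.eigenvalues q)
    (hab : hB.eigenvalues a ≠ hB.eigenvalues b) :
    ∃ S ∈ orthogonalGroup n ℝ, (S * A * Sᵀ * B).trace ≠ 0 := by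
  obtain ⟨σ, hσ⟩ := exists_perm_sum_mul_ne_zero hpq hab
  set U : Matrix n n ℝ := ↑hA.eigenvectorUnitary
  set V : Matrix n n ℝ := ↑hB.eigenvectorUnitary
  set M := σ.permMatrix ℝ
  set d := hA.eigenvalues
  set e := hB.eigenvalues
  have hA_eq : A = U * diagonal d * Uᵀ := hA.eq_eigenvectorUnitary_mul_diagonal_mul_transpose
  have hB_eq : B = V * diagonal e * Vᵀ := hB.eq_eigenvectorUnitary_mul_diagonal_mul_transpose
  have hU : Uᵀ * U = 1 := (mem_orthogonalGroup_iff' n ℝ).mp hA.eigenvectorUnitary.2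
  have hV : Vᵀ * V = 1 := (mem_orthogonalGroup_iff' n ℝ).mp hB.eigenvectorUnitary.2
  have cancel_U (X : Matrix n n ℝ) : Uᵀ * (U * X) = X := by rw [← Matrix.mul_assoc, hU, one_mul]
  have cancel_V (X : Matrix n n ℝ) : Vᵀ * (V * X) = X := by rw [← Matrix.mul_assoc, hV, one_mul]
  refine ⟨V * M * Uᵀ, mul_mem (mul_mem hB.eigenvectorUnitary.2 (permMatrix_mem_orthogonalGroup σ))
    (transpose_mem_orthogonalGroup hA.eigenvectorUnitary.2), ?_⟩
  have hconj : V * M * Uᵀ * A * (V * M * Uᵀ)ᵀ * B =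
      V * (M * diagonal d * Mᵀ * diagonal e) * Vᵀ := by
    rw [hA_eq, hB_eq]
    simp only [transpose_mul, transpose_transpose, Matrix.mul_assoc, cancel_U, cancel_V]
  rwa [hconj, trace_mul_comm, ← Matrix.mul_assoc, hV, one_mul,
    permMatrix_mul_diagonal_mul_transpose, diagonal_mul_diagonal, trace_diagonal]

end Real

theorem stmt13_general (k : ℕ) (P R : Fin k → Matrix (Fin 4) (Fin 4) ℝ)
    (hPsymm : ∀ j, (P j).IsSymm) (hPtr : ∀ j, (P j).trace = 0)
    (hRsymm : ∀ i, (R i).IsSymm) (hRtr : ∀ i, (R i).trace = 0) :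
    (∃ S ∈ Matrix.orthogonalGroup (Fin 4) ℝ, ∃ T ∈ Matrix.orthogonalGroup (Fin k) ℝ,
      0 ≤ ∑ i : Fin k, ∑ j : Fin k, T i j * (S * P j * Sᵀ * R i).trace) ∧
    (P ≠ 0 → R ≠ 0 →
      ∃ S ∈ Matrix.orthogonalGroup (Fin 4) ℝ, ∃ T ∈ Matrix.orthogonalGroup (Fin k) ℝ,
        0 < ∑ i : Fin k, ∑ j : Fin k, T i j * (S * P j * Sᵀ * R i).trace) := by
  refine ⟨?_, fun hP hR => ?_⟩
  · obtain ⟨T, hT, hsum⟩ :=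
      exists_orthogonal_sum_mul_eq_sum_abs (of fun i j => (P j * R i).trace) 1
    refine ⟨1, one_mem _, T, hT, ?_⟩
    simp only [one_mul, transpose_one, mul_one]
    exact hsum ▸ Finset.sum_nonneg fun i _ => abs_nonneg _
  · obtain ⟨j₀, hj₀⟩ := Function.ne_iff.mp hP
    obtain ⟨i₀, hi₀⟩ := Function.ne_iff.mp hR
    have hPh : (P j₀).IsHermitian := isHermitian_iff_isSymm.mpr (hPsymm j₀)
    have hRh : (R i₀).IsHermitian := isHermitian_iff_isSymm.mpr (hRsymm i₀)
    obtain ⟨p, q, hpq⟩ := hPh.exists_eigenvalues_ne (hPtr j₀) hj₀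
    obtain ⟨a, b, hab⟩ := hRh.exists_eigenvalues_ne (hRtr i₀) hi₀
    obtain ⟨S, hS, hS₀⟩ := exists_orthogonal_trace_mul_ne_zero hPh hRh hpq hab
    obtain ⟨T, hT, hsum⟩ := exists_orthogonal_sum_mul_eq_sum_abs
      (of fun i j => (S * P j * Sᵀ * R i).trace) (swap i₀ j₀)
    refine ⟨S, hS, T, hT, ?_⟩
    refine hsum ▸ Finset.sum_pos' (fun i _ => abs_nonneg _) ⟨i₀, Finset.mem_univ _, ?_⟩
    rw [of_apply, swap_apply_left]
    exact abs_pos.mpr hS₀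

/-- given `k`-tuples `P̊, R̊` of symmetric traceless real 4×4 matrices, there are
orthogonal transformations `S ∈ O(4)`, `T ∈ O(k)` making the pairing
`Σ_{i,j} T_{ij} Tr(S P̊ⱼ Sᵀ R̊ᵢ)` nonnegative, and positive when `P̊ ≠ 0` and `R̊ ≠ 0`. -/
theorem stmt13 (k : ℕ) (hk : 1 ≤ k) (P R : Fin k → Matrix (Fin 4) (Fin 4) ℝ)
    (hPsymm : ∀ j, (P j).IsSymm) (hPtr : ∀ j, (P j).trace = 0)
    (hRsymm : ∀ i, (R i).IsSymm) (hRtr : ∀ i, (R i).trace = 0) :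
    (∃ S ∈ Matrix.orthogonalGroup (Fin 4) ℝ, ∃ T ∈ Matrix.orthogonalGroup (Fin k) ℝ,
      0 ≤ ∑ i : Fin k, ∑ j : Fin k, T i j * (S * P j * Sᵀ * R i).trace) ∧
    (P ≠ 0 → R ≠ 0 →
      ∃ S ∈ Matrix.orthogonalGroup (Fin 4) ℝ, ∃ T ∈ Matrix.orthogonalGroup (Fin k) ℝ,
        0 < ∑ i : Fin k, ∑ j : Fin k, T i j * (S * P j * Sᵀ * R i).trace) :=
  stmt13_general k P R hPsymm hPtr hRsymm hRtr
end
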